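/- arXiv:2112.15520 — 3 statements merged into one kernel-verified Lean document; each statement's English description precedes it below -/
import Mathlib

section
/- Let K be the Cantor space (compact, totally disconnected, perfect, metrizable) and Ω a compact connected metric space. Then for every homeomorphism α: K×Ω → K×Ω there exist a homeomorphism α̃ of K and a continuous map c: K → H(Ω) such that α(x,ω) = (α̃(x), c_x(ω)) for all (x,ω) ∈ K×Ω. -/
/-! Since `K` is totally disconnected and `Ω` is connected, the connected image of a fibre
`{x} × Ω` under `α` has a single first coordinate, so `α` permutes the fibres; this yields the
base homeomorphism `α̃` and the fibre homeomorphisms `c x`. Continuity of `c` for the uniform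
metric is joint continuity of `(x, ω) ↦ c x ω` and `(x, ω) ↦ (c x)⁻¹ ω`, upgraded to
uniformity in `ω` by compactness of `Ω`. -/

open Topology

theorem Continuous.apply_eq_of_totallyDisconnectedSpace {Y Z : Type*} [TopologicalSpace Y]
    [PreconnectedSpace Y] [TopologicalSpace Z] [TotallyDisconnectedSpace Z] {f : Y → Z}
    (hf : Continuous f) (y y' : Y) : f y = f y' :=
  (isPreconnected_univ.image f hf.continuousOn).subsingleton
    ⟨y, trivial, rfl⟩ ⟨y', trivial, rfl⟩

theorem Continuous.eventually_iSup_dist_le {X Y Z : Type*} [UniformSpace X]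
    [WeaklyLocallyCompactSpace X] [UniformSpace Y] [CompactSpace Y] [Nonempty Y]
    [PseudoMetricSpace Z] {f : X → Y → Z} (hf : Continuous fun p : X × Y => f p.1 p.2) (x : X)
    {ε : ℝ} (hε : 0 < ε) :
    ∀ᶠ x' in 𝓝 x, ⨆ y, dist (f x y) (f x' y) ≤ ε := by
  filter_upwards [Metric.tendstoUniformly_iff.mp (hf.tendstoUniformly f x) ε hε] with x' hx'
  exact ciSup_le fun y => (hx' y).le

namespace Homeomorph

variable {X Y : Type*} [TopologicalSpace X] [TotallyDisconnectedSpace X]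
  [TopologicalSpace Y] [PreconnectedSpace Y] (α : X × Y ≃ₜ X × Y)

theorem fst_apply_mk_eq (x : X) (y y' : Y) : (α (x, y)).1 = (α (x, y')).1 :=
  Continuous.apply_eq_of_totallyDisconnectedSpace (f := fun y => (α (x, y)).1) (by fun_prop) y y'

theorem fst_symm_apply_mk_fst_apply (x : X) (y y' : Y) : (α.symm ((α (x, y)).1, y')).1 = x := by
  rw [α.symm.fst_apply_mk_eq _ y' (α (x, y)).2, α.symm_apply_apply]

variable [Nonempty Y]

noncomputable def prodBase : X ≃ₜ X where
  toFun x := (α (x, Classical.arbitrary Y)).1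
  invFun x := (α.symm (x, Classical.arbitrary Y)).1
  left_inv x := α.fst_symm_apply_mk_fst_apply x _ _
  right_inv x := α.symm.fst_symm_apply_mk_fst_apply x _ _
  continuous_toFun := by fun_prop
  continuous_invFun := by fun_prop

theorem prodBase_apply (x : X) (y : Y) : α.prodBase x = (α (x, y)).1 :=
  α.fst_apply_mk_eq x _ y

theorem fst_symm_apply_prodBase (x : X) (y : Y) : (α.symm (α.prodBase x, y)).1 = x :=
  α.fst_symm_apply_mk_fst_apply x _ y

noncomputable def prodFiber (x : X) : Y ≃ₜ Y where
  toFun y := (α (x, y)).2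
  invFun y := (α.symm (α.prodBase x, y)).2
  left_inv y := by
    show (α.symm (α.prodBase x, (α (x, y)).2)).2 = y
    rw [α.prodBase_apply x y, symm_apply_apply]
  right_inv y := by
    show (α (x, (α.symm (α.prodBase x, y)).2)).2 = y
    nth_rw 1 [← α.fst_symm_apply_prodBase x y]
    rw [Prod.mk.eta, apply_symm_apply]
  continuous_toFun := by fun_prop
  continuous_invFun := by fun_prop

theorem apply_mk_eq_prodBase_prodFiber (x : X) (y : Y) :
    α (x, y) = (α.prodBase x, α.prodFiber x y) :=
  Prod.ext (α.prodBase_apply x y).symm rfl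

theorem continuous_prodFiber : Continuous fun p : X × Y => α.prodFiber p.1 p.2 :=
  continuous_snd.comp α.continuous

theorem continuous_prodFiber_symm : Continuous fun p : X × Y => (α.prodFiber p.1).symm p.2 :=
  continuous_snd.comp (α.symm.continuous.comp (α.prodBase.continuous.prodMap continuous_id))

end Homeomorph

theorem stmt_2_general (K Ω : Type*) [MetricSpace K] [CompactSpace K]
    [TotallyDisconnectedSpace K]
    [MetricSpace Ω] [CompactSpace Ω] [ConnectedSpace Ω]
    (α : (K × Ω) ≃ₜ (K × Ω)) :
    ∃ (α' : K ≃ₜ K) (c : K → (Ω ≃ₜ Ω)),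
      (∀ (x : K) (ω : Ω), α (x, ω) = (α' x, c x ω)) ∧
      (∀ x : K, ∀ ε > (0:ℝ), ∃ δ > (0:ℝ), ∀ y : K, dist x y < δ →
        (⨆ ω : Ω, dist (c x ω) (c y ω)) +
          (⨆ ω : Ω, dist ((c x).symm ω) ((c y).symm ω)) < ε) := by
  refine ⟨α.prodBase, α.prodFiber, α.apply_mk_eq_prodBase_prodFiber, fun x ε hε => ?_⟩
  have hε3 : 0 < ε / 3 := by positivity
  obtain ⟨δ, hδ, hball⟩ := Metric.eventually_nhds_iff.mp
    ((α.continuous_prodFiber.eventually_iSup_dist_le (f := fun x => α.prodFiber x) x hε3).and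
      (α.continuous_prodFiber_symm.eventually_iSup_dist_le (f := fun x => (α.prodFiber x).symm)
        x hε3))
  refine ⟨δ, hδ, fun y hy => ?_⟩
  obtain ⟨h, h_symm⟩ := hball (by rwa [dist_comm])
  linarith

/-- Every homeomorphism of `K × Ω` (`K` the Cantor space, `Ω` compact connected metric)
is a skew product `α(x,ω) = (α̃ x, c_x ω)` with `c : K → H(Ω)` continuous for the uniform
metric on the homeomorphism group of `Ω`. -/
theorem stmt_2 (K Ω : Type*) [MetricSpace K] [CompactSpace K]
    [TotallyDisconnectedSpace K] (hK : Perfect (Set.univ : Set K))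
    [MetricSpace Ω] [CompactSpace Ω] [ConnectedSpace Ω]
    (α : (K × Ω) ≃ₜ (K × Ω)) :
    ∃ (α' : K ≃ₜ K) (c : K → (Ω ≃ₜ Ω)),
      (∀ (x : K) (ω : Ω), α (x, ω) = (α' x, c x ω)) ∧
      (∀ x : K, ∀ ε > (0:ℝ), ∃ δ > (0:ℝ), ∀ y : K, dist x y < δ →
        (⨆ ω : Ω, dist (c x ω) (c y ω)) +
          (⨆ ω : Ω, dist ((c x).symm ω) ((c y).symm ω)) < ε) :=
  stmt_2_general K Ω α
end

section
/- Let X be a compact metric space and O ⊆ X a nonempty open set. Then the set E_O = {h ∈ H(X) : ⋃_{i=0}^{∞} hⁱ(O) = X} is open in H(X) with respect to the metric d(α,β) = sup d(α(x),β(x)) + sup d(α⁻¹(x),β⁻¹(x)). Moreover, h ∈ E_O if and only if there exists N with ⋃_{i=0}^{N} hⁱ(O) = X. -/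
/-!
The iterates `hⁱ(O)` are open, so by compactness a cover of `X` by them is already a cover by
`h⁰(O), …, hᴺ(O)`, and it has a Lebesgue number `δ`. If `g` is uniformly close to `h`, uniform
continuity of `h` makes `gⁱ` `δ`-close to `hⁱ` for all `i ≤ N`; then every `x = gⁱ(y)` lies within
`δ` of `hⁱ(y)`, which forces `y ∈ O`, so the iterates of `g` cover `X` as well.
-/

/-- The uniform metric on the homeomorphism group of a compact metric space. -/
noncomputable def uD {X : Type*} [MetricSpace X] (α β : X ≃ₜ X) : ℝ :=
  (⨆ x : X, dist (α x) (β x)) + ⨆ x : X, dist (α.symm x) (β.symm x)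

/-- `EO O` is the set of homeomorphisms whose forward iterates of `O` cover the space. -/
def EO {X : Type*} [TopologicalSpace X] (O : Set X) : Set (X ≃ₜ X) :=
  {h : X ≃ₜ X | (⋃ i : ℕ, (⇑h)^[i] '' O) = Set.univ}

open Set Function

theorem iUnion_eq_univ_iff_exists_accumulate_eq_univ {X ι : Type*} [TopologicalSpace X]
    [CompactSpace X] [Preorder ι] [IsDirectedOrder ι] [Nonempty ι] {U : ι → Set X}
    (hU : ∀ i, IsOpen (U i)) : ⋃ i, U i = univ ↔ ∃ N, accumulate U N = univ := by
  refine ⟨fun hcover => ?_, fun ⟨N, hN⟩ => eq_univ_of_univ_subset ?_⟩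
  · obtain ⟨N, hN⟩ := isCompact_univ.elim_directed_cover (accumulate U)
      (fun N => isOpen_biUnion fun i _ => hU i) (by rw [iUnion_accumulate, hcover])
      monotone_accumulate.directed_le
    exact ⟨N, univ_subset_iff.mp hN⟩
  · exact hN ▸ accumulate_subset_iUnion N

theorem Homeomorph.isOpenMap_iterate {X : Type*} [TopologicalSpace X] (h : X ≃ₜ X) (n : ℕ) :
    IsOpenMap (⇑h)^[n] := by
  induction n with
  | zero => exact IsOpenMap.id
  | succ n ih => exact iterate_succ' (⇑h) n ▸ h.isOpenMap.comp ih

theorem UniformContinuous.exists_pos_forall_dist_iterate_lt {X : Type*} [PseudoMetricSpace X]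
    {f : X → X} (hf : UniformContinuous f) (N : ℕ) {δ : ℝ} (hδ : 0 < δ) :
    ∃ ε > 0, ∀ g : X → X, (∀ y, dist (f y) (g y) < ε) →
      ∀ i ≤ N, ∀ y, dist (f^[i] y) (g^[i] y) < δ := by
  induction N generalizing δ with
  | zero =>
    refine ⟨δ, hδ, fun g _ i hi y => ?_⟩
    simpa [Nat.le_zero.mp hi] using hδ
  | succ N ih =>
    obtain ⟨s, hs, hfs⟩ := Metric.uniformContinuous_iff.mp hf (δ / 2) (half_pos hδ)
    obtain ⟨ε, hε, hN⟩ := ih (lt_min hs hδ)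
    refine ⟨min ε (δ / 2), lt_min hε (half_pos hδ), fun g hg i hi y => ?_⟩
    have hgε : ∀ y, dist (f y) (g y) < ε := fun y => (hg y).trans_le (min_le_left _ _)
    rcases hi.lt_or_eq with hi | rfl
    · exact (hN g hgε i (Nat.lt_succ_iff.mp hi) y).trans_le (min_le_right _ _)
    have hf_step : dist (f (f^[N] y)) (f (g^[N] y)) < δ / 2 :=
      hfs ((hN g hgε N le_rfl y).trans_le (min_le_left _ _))
    have hg_step : dist (f (g^[N] y)) (g (g^[N] y)) < δ / 2 :=
      (hg _).trans_le (min_le_right _ _)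
    calc dist (f^[N + 1] y) (g^[N + 1] y)
        = dist (f (f^[N] y)) (g (g^[N] y)) := by simp only [iterate_succ_apply']
      _ ≤ dist (f (f^[N] y)) (f (g^[N] y)) + dist (f (g^[N] y)) (g (g^[N] y)) :=
          dist_triangle _ _ _
      _ < δ := by linarith

theorem dist_apply_le_uD {X : Type*} [MetricSpace X] [CompactSpace X] (h g : X ≃ₜ X) (y : X) :
    dist (h y) (g y) ≤ uD h g := by
  have hbdd : BddAbove (range fun y => dist (h y) (g y)) :=
    (isCompact_range (by fun_prop)).bddAbove
  calc dist (h y) (g y) ≤ ⨆ x, dist (h x) (g x) := le_ciSup hbdd y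
    _ ≤ uD h g := le_add_of_nonneg_right (Real.iSup_nonneg fun _ => dist_nonneg)

theorem exists_pos_mem_EO_of_dist_iterate_lt {X : Type*} [MetricSpace X] [CompactSpace X]
    {O : Set X} (hO : IsOpen O) {h : X ≃ₜ X} {N : ℕ}
    (hN : accumulate (fun i => (⇑h)^[i] '' O) N = univ) :
    ∃ δ > 0, ∀ g : X ≃ₜ X, (∀ i ≤ N, ∀ y, dist ((⇑h)^[i] y) ((⇑g)^[i] y) < δ) → g ∈ EO O := by
  have hcover : univ ⊆ ⋃ i : Iic N, (⇑h)^[i] '' O := by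
    simpa [iUnion_subtype, accumulate_def] using hN.ge
  obtain ⟨δ, hδ, hball⟩ := lebesgue_number_lemma_of_metric isCompact_univ
    (fun i : Iic N => h.isOpenMap_iterate i O hO) hcover
  refine ⟨δ, hδ, fun g hg => eq_univ_of_forall fun x => ?_⟩
  obtain ⟨⟨i, hi⟩, hx⟩ := hball x (mem_univ x)
  obtain ⟨y, rfl⟩ := g.surjective.iterate i x
  have hy : (⇑h)^[i] y ∈ (⇑h)^[i] '' O := hx (hg i (mem_Iic.mp hi) y)
  exact mem_iUnion.mpr ⟨i, mem_image_of_mem _ ((h.injective.iterate i).mem_set_image.mp hy)⟩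

theorem stmt_7_general (X : Type*) [MetricSpace X] [CompactSpace X]
    (O : Set X) (hO : IsOpen O) :
    (∀ h ∈ EO O, ∃ ε > (0:ℝ), ∀ g : X ≃ₜ X, uD h g < ε → g ∈ EO O) ∧
    (∀ h : X ≃ₜ X, h ∈ EO O ↔ ∃ N : ℕ, (⋃ i ≤ N, (⇑h)^[i] '' O) = Set.univ) := by
  have hfinite (h : X ≃ₜ X) : h ∈ EO O ↔ ∃ N : ℕ, (⋃ i ≤ N, (⇑h)^[i] '' O) = univ :=
    iUnion_eq_univ_iff_exists_accumulate_eq_univ fun i => h.isOpenMap_iterate i O hO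
  refine ⟨fun h hh => ?_, hfinite⟩
  obtain ⟨N, hN⟩ := (hfinite h).mp hh
  obtain ⟨δ, hδ, hstable⟩ := exists_pos_mem_EO_of_dist_iterate_lt hO hN
  have hunif : UniformContinuous h := CompactSpace.uniformContinuous_of_continuous h.continuous
  obtain ⟨ε, hε, hclose⟩ := hunif.exists_pos_forall_dist_iterate_lt N hδ
  exact ⟨ε, hε, fun g hg =>
    hstable g (hclose g fun y => (dist_apply_le_uD h g y).trans_lt hg)⟩

/-- `E_O` is open for the uniform metric on `H(X)`, and membership in `E_O` is
equivalent to covering by finitely many iterates. -/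
theorem stmt_7 (X : Type*) [MetricSpace X] [CompactSpace X]
    (O : Set X) (hO : IsOpen O) (hne : O.Nonempty) :
    (∀ h ∈ EO O, ∃ ε > (0:ℝ), ∀ g : X ≃ₜ X, uD h g < ε → g ∈ EO O) ∧
    (∀ h : X ≃ₜ X, h ∈ EO O ↔ ∃ N : ℕ, (⋃ i ≤ N, (⇑h)^[i] '' O) = Set.univ) :=
  stmt_7_general X O hO
end

section
/- Let K be a compact metric space, α̃: K → K a minimal homeomorphism, H a torsion-free abelian group, and e ∈ H a nonzero element. If f: K → ℤ is continuous and there exists a locally constant G: K → H with f(x)·e = G(x) − G(α̃⁻¹(x)) for all x ∈ K, then there exists a continuous g: K → ℤ with f(x) = g(x) − g(α̃⁻¹(x)) for all x ∈ K. Consequently, the positive group homomorphism ι: C(K,ℤ)/{h − h∘α̃⁻¹} → C(K,H)/{G − G∘α̃⁻¹} induced by f ↦ f·e is injective. -/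
/-!
Reducing `G` modulo `ℤ e` gives a locally constant function invariant under `α`, hence constant by
minimality. So `G x = G x₀ + g x • e` with `g` a locally constant function of `G`, and cancelling
`e` (torsion-freeness) in `f x • e = G x - G (α⁻¹ x)` shows that `f` is the coboundary of `g`.
-/

section

variable {K : Type*} [TopologicalSpace K]

theorem IsLocallyConstant.eq_of_minimal_of_invariant {Y : Type*} {α : K ≃ₜ K}
    (hmin : ∀ F : Set K, IsClosed F → ⇑α '' F = F → F = ∅ ∨ F = Set.univ)
    {φ : K → Y} (hφ : IsLocallyConstant φ) (hinv : ∀ x, φ (α x) = φ x) (x y : K) :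
    φ x = φ y := by
  have hF : {z | φ z = φ x} = Set.univ := by
    refine (hmin _ (hφ.isClopen_fiber _).isClosed ?_).resolve_left
      (Set.nonempty_of_mem (s := {z | φ z = φ x}) rfl).ne_empty
    ext z
    simp only [α.image_eq_preimage_symm, Set.mem_preimage, Set.mem_ofPred_eq,
      ← hinv (α.symm z), Homeomorph.apply_symm_apply]
  have hy : y ∈ {z | φ z = φ x} := hF ▸ Set.mem_univ y
  exact hy.symm

theorem IsLocallyConstant.exists_continuous_int_of_sub_mem_zmultiples {H : Type*}
    [AddCommGroup H] {e : H} {G : K → H} (hG : IsLocallyConstant G) (x₀ : K)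
    (hmem : ∀ x, G x - G x₀ ∈ AddSubgroup.zmultiples e) :
    ∃ g : K → ℤ, Continuous g ∧ ∀ x, G x = G x₀ + g x • e := by
  refine ⟨Function.invFun (fun n : ℤ => G x₀ + n • e) ∘ G, (hG.comp _).continuous, fun x => ?_⟩
  obtain ⟨n, hn⟩ := AddSubgroup.mem_zmultiples_iff.mp (hmem x)
  exact (Function.invFun_eq (f := fun n : ℤ => G x₀ + n • e) ⟨n, by rw [hn, add_sub_cancel]⟩).symm

theorem exists_int_coboundary_of_smul_eq_coboundary {α : K ≃ₜ K}
    (hmin : ∀ F : Set K, IsClosed F → ⇑α '' F = F → F = ∅ ∨ F = Set.univ)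
    {H : Type*} [AddCommGroup H] [NoZeroSMulDivisors ℤ H] {e : H} (he : e ≠ 0)
    {f : K → ℤ} {G : K → H} (hG : IsLocallyConstant G)
    (hf : ∀ x, f x • e = G x - G (α.symm x)) :
    ∃ g : K → ℤ, Continuous g ∧ ∀ x, f x = g x - g (α.symm x) := by
  rcases isEmpty_or_nonempty K with hK | ⟨⟨x₀⟩⟩
  · exact ⟨0, continuous_const, isEmptyElim⟩
  have hinv : ∀ x, (G (α x) : H ⧸ AddSubgroup.zmultiples e) = G x := fun x => by
    have h := hf (α x)
    rw [α.symm_apply_apply] at h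
    rw [QuotientAddGroup.eq_iff_sub_mem, ← h]
    exact AddSubgroup.zsmul_mem_zmultiples e _
  have hmem : ∀ x, G x - G x₀ ∈ AddSubgroup.zmultiples e := fun x =>
    QuotientAddGroup.eq_iff_sub_mem.mp <|
      IsLocallyConstant.eq_of_minimal_of_invariant hmin (hG.comp _) hinv x x₀
  obtain ⟨g, hg_cont, hg⟩ := hG.exists_continuous_int_of_sub_mem_zmultiples x₀ hmem
  refine ⟨g, hg_cont, fun x => smul_left_injective ℤ he ?_⟩
  simp only [hf, hg x, hg (α.symm x), sub_smul]
  abel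

end

theorem stmt_18_general (K : Type*) [MetricSpace K] (α : K ≃ₜ K)
    (hmin : ∀ F : Set K, IsClosed F → ⇑α '' F = F → F = ∅ ∨ F = Set.univ)
    (H : Type*) [AddCommGroup H] [NoZeroSMulDivisors ℤ H] (e : H) (he : e ≠ 0) :
    (∀ f : K → ℤ, Continuous f →
      (∃ G : K → H, IsLocallyConstant G ∧ ∀ x : K, f x • e = G x - G (α.symm x)) →
      ∃ g : K → ℤ, Continuous g ∧ ∀ x : K, f x = g x - g (α.symm x)) ∧
    (∀ f₁ f₂ : K → ℤ, Continuous f₁ → Continuous f₂ →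
      (∃ G : K → H, IsLocallyConstant G ∧
        ∀ x : K, (f₁ x - f₂ x) • e = G x - G (α.symm x)) →
      ∃ g : K → ℤ, Continuous g ∧ ∀ x : K, f₁ x - f₂ x = g x - g (α.symm x)) :=
  ⟨fun _ _ ⟨_, hG, hf⟩ => exists_int_coboundary_of_smul_eq_coboundary hmin he hG hf,
    fun _ _ _ _ ⟨_, hG, hf⟩ => exists_int_coboundary_of_smul_eq_coboundary hmin he hG hf⟩

/-- If `f • e` is a coboundary for a locally constant function valued in a torsion-free
abelian group `H` (with `e ≠ 0`), then `f` itself is an integer coboundary; consequently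
the induced positive homomorphism `C(K,ℤ)/coboundaries → C(K,H)/coboundaries`, `f ↦ f·e`,
is injective. -/
theorem stmt_18 (K : Type*) [MetricSpace K] [CompactSpace K] (α : K ≃ₜ K)
    (hmin : ∀ F : Set K, IsClosed F → ⇑α '' F = F → F = ∅ ∨ F = Set.univ)
    (H : Type*) [AddCommGroup H] [NoZeroSMulDivisors ℤ H] (e : H) (he : e ≠ 0) :
    (∀ f : K → ℤ, Continuous f →
      (∃ G : K → H, IsLocallyConstant G ∧ ∀ x : K, f x • e = G x - G (α.symm x)) →
      ∃ g : K → ℤ, Continuous g ∧ ∀ x : K, f x = g x - g (α.symm x)) ∧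
    (∀ f₁ f₂ : K → ℤ, Continuous f₁ → Continuous f₂ →
      (∃ G : K → H, IsLocallyConstant G ∧
        ∀ x : K, (f₁ x - f₂ x) • e = G x - G (α.symm x)) →
      ∃ g : K → ℤ, Continuous g ∧ ∀ x : K, f₁ x - f₂ x = g x - g (α.symm x)) :=
  stmt_18_general K α hmin H e he
end
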